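/- Fix a rooted forest T on a finite vertex set V and a set N ⊆ V. If a vertex u satisfies s(u) > 0, then u ∈ N or u has a child c with s(c) > 0. -/

import Mathlib

open scoped Classical

/-- `u` is a strict ancestor of `w`: `u` is obtained from `w` by iterating the
parent assignment `p` at least once (and `u ≠ w`). -/
def StrictAnc {V : Type*} (p : V → V) (u w : V) : Prop :=
  u ≠ w ∧ ∃ k : ℕ, p^[k + 1] w = u

/-- `p` is the parent assignment of a rooted forest: iterating `p` from any
vertex reaches a root (a fixed point of `p`), so there are no cycles. -/
def IsRootedForest {V : Type*} (p : V → V) : Prop :=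
  ∀ v : V, ∃ n : ℕ, p^[n + 1] v = p^[n] v

/-- The subtree of `u`: all vertices having `u` as ancestor-or-equal. -/
def subtree {V : Type*} (p : V → V) (u : V) : Set V :=
  {w | u = w ∨ StrictAnc p u w}

/-- The children of `u` in the forest. -/
def children {V : Type*} (p : V → V) (u : V) : Set V :=
  {c | p c = u ∧ c ≠ u}

/-- Child closeness of `w` w.r.t. the neighbour set `N`:
`|subtree(w) ∩ N| − |subtree(w) \ N|`. -/
noncomputable def cc {V : Type*} (p : V → V) (N : Set V) (w : V) : ℤ :=
  ((subtree p w ∩ N).ncard : ℤ) - ((subtree p w \ N).ncard : ℤ)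

/-- `S(u, C)`: the union of `{u}`, the strict ancestors of `u`, and the
subtrees of the children in `C`. -/
def editSet {V : Type*} (p : V → V) (u : V) (C : Set V) : Set V :=
  insert u ({x | StrictAnc p x u} ∪ ⋃ c ∈ C, subtree p c)

/-- The edit cost `cost(u, C) = |S(u,C) \ N| + |N \ S(u,C)|`. -/
noncomputable def cost {V : Type*} (p : V → V) (N : Set V) (u : V) (C : Set V) : ℕ :=
  (editSet p u C \ N).ncard + (N \ editSet p u C).ncard

/-- The vertex set of the tree path from `u` down to `w` (both inclusive):
all `x` with `u` ancestor-or-equal of `x` and `x` ancestor-or-equal of `w`. -/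
def pathSet {V : Type*} (p : V → V) (u w : V) : Set V :=
  {x | (u = x ∨ StrictAnc p u x) ∧ (x = w ∨ StrictAnc p x w)}

/-- `X(u, w, C)`: the union of the tree path from `u` down to `w` and the
subtrees of the children in `C`. -/
def pathUnion {V : Type*} (p : V → V) (u w : V) (C : Set V) : Set V :=
  pathSet p u w ∪ ⋃ c ∈ C, subtree p c

/-- The maximum score `s(u)`: the maximum, over all vertices `w` in the
subtree of `u` and all sets `C` of children of `w`, of
`|X ∩ N| − |X \ N|` where `X = pathUnion p u w C`. -/
noncomputable def maxScore {V : Type*} (p : V → V) (N : Set V) (u : V) : ℤ :=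
  sSup {z : ℤ | ∃ w ∈ subtree p u, ∃ C ⊆ children p w,
    z = ((pathUnion p u w C ∩ N).ncard : ℤ) - ((pathUnion p u w C \ N).ncard : ℤ)}

/-! A pair `(w, C)` realizing `s(u)` gives a set `X` of positive score. If `u ∉ N`, then
`X \ {u}` has score `s(u) + 1`, and it lives below the children of `u`: for `w ≠ u` it is
`X(c, w, C)` for the child `c` of `u` above `w`, so `s(c) > 0`; for `w = u` it is the disjoint
union of the subtrees of the children in `C`, so one of them has positive score, and a
subtree is itself an admissible `X(c, c, children c)`. -/

section Forest

variable {V : Type*} {p : V → V}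

theorem mem_subtree_iff {u w : V} : w ∈ subtree p u ↔ ∃ k, p^[k] w = u := by
  constructor
  · rintro (rfl | ⟨-, k, hk⟩)
    · exact ⟨0, rfl⟩
    · exact ⟨k + 1, hk⟩
  · rintro ⟨_ | k, hk⟩
    · exact Or.inl hk.symm
    · by_cases h : u = w
      · exact Or.inl h
      · exact Or.inr ⟨h, k, hk⟩

theorem self_mem_subtree (u : V) : u ∈ subtree p u := Or.inl rfl

theorem mem_subtree_of_apply_mem {c w : V} (h : p w ∈ subtree p c) : w ∈ subtree p c := by
  obtain ⟨k, hk⟩ := mem_subtree_iff.1 h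
  exact mem_subtree_iff.2 ⟨k + 1, hk⟩

theorem mem_subtree_of_mem_children {c u : V} (hc : c ∈ children p u) : c ∈ subtree p u :=
  mem_subtree_of_apply_mem (hc.1 ▸ self_mem_subtree (p c))

theorem subtree_subset_of_mem {a b : V} (hab : a ∈ subtree p b) :
    subtree p a ⊆ subtree p b := by
  intro x hx
  obtain ⟨i, hi⟩ := mem_subtree_iff.1 hx
  obtain ⟨j, hj⟩ := mem_subtree_iff.1 hab
  exact mem_subtree_iff.2 ⟨j + i, by rw [Function.iterate_add_apply, hi, hj]⟩

theorem mem_subtree_or_mem_subtree {a b x : V} (ha : x ∈ subtree p a) (hb : x ∈ subtree p b) :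
    a ∈ subtree p b ∨ b ∈ subtree p a := by
  obtain ⟨i, rfl⟩ := mem_subtree_iff.1 ha
  obtain ⟨j, rfl⟩ := mem_subtree_iff.1 hb
  rcases le_total i j with hij | hij
  · obtain ⟨t, rfl⟩ := Nat.exists_eq_add_of_le' hij
    exact Or.inl (mem_subtree_iff.2 ⟨t, (Function.iterate_add_apply p t i x).symm⟩)
  · obtain ⟨t, rfl⟩ := Nat.exists_eq_add_of_le' hij
    exact Or.inr (mem_subtree_iff.2 ⟨t, (Function.iterate_add_apply p t j x).symm⟩)

theorem subtree_eq_insert_biUnion_children (u : V) :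
    subtree p u = insert u (⋃ c ∈ children p u, subtree p c) := by
  refine Set.Subset.antisymm (fun w hw => ?_) ?_
  · obtain ⟨k, hk⟩ := mem_subtree_iff.1 hw
    clear hw
    induction k generalizing w with
    | zero => exact Or.inl hk
    | succ k ih =>
      rw [Function.iterate_succ_apply] at hk
      rcases ih (p w) hk with hpw | hpw
      · by_cases hwu : w = u
        · exact Or.inl hwu
        · exact Or.inr (Set.mem_biUnion ⟨hpw, hwu⟩ (self_mem_subtree w))
      · obtain ⟨c, hc, hpwc⟩ := Set.mem_iUnion₂.1 hpw
        exact Or.inr (Set.mem_biUnion hc (mem_subtree_of_apply_mem hpwc))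
  · exact Set.insert_subset (self_mem_subtree u)
      (Set.iUnion₂_subset fun c hc => subtree_subset_of_mem (mem_subtree_of_mem_children hc))

theorem exists_mem_children_of_strictAnc {u w : V} (h : StrictAnc p u w) :
    ∃ c ∈ children p u, w ∈ subtree p c := by
  have hw : w ∈ subtree p u := Or.inr h
  rw [subtree_eq_insert_biUnion_children] at hw
  rcases hw with rfl | hw
  · exact absurd rfl h.1
  · simpa only [Set.mem_iUnion₂, exists_prop] using hw

theorem pathUnion_subset_subtree {u w : V} {C : Set V} (hw : w ∈ subtree p u)
    (hC : C ⊆ children p w) : pathUnion p u w C ⊆ subtree p u :=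
  Set.union_subset (fun _ hx => hx.1) <| Set.iUnion₂_subset fun _ hc =>
    subtree_subset_of_mem (subtree_subset_of_mem hw (mem_subtree_of_mem_children (hC hc)))

namespace IsRootedForest

variable (hp : IsRootedForest p)
include hp

/-- Some `p^[m] a` is a root; going `m` times around the cycle through `a`, i.e.
`(n + 1) * m ≥ m` steps, returns to `a` but passes that root, where the orbit stays. -/
theorem apply_eq_of_iterate_succ_eq {a : V} {n : ℕ} (h : p^[n + 1] a = a) : p a = a := by
  obtain ⟨m, hm⟩ := hp a
  have hroot : p (p^[m] a) = p^[m] a := by rwa [← Function.iterate_succ_apply' p m a]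
  have ha : a = p^[m] a :=
    calc a = (p^[n + 1])^[m] a := (Function.iterate_fixed h m).symm
      _ = p^[(n + 1) * m - m] (p^[m] a) := by
        rw [← Function.iterate_mul, ← Function.iterate_add_apply,
          Nat.sub_add_cancel (Nat.le_mul_of_pos_left m n.succ_pos)]
      _ = p^[m] a := Function.iterate_fixed hroot _
  rw [ha]
  exact hroot

theorem eq_of_mem_subtree_of_mem_subtree {a b : V} (hab : a ∈ subtree p b)
    (hba : b ∈ subtree p a) : a = b := by
  obtain ⟨i, hi⟩ := mem_subtree_iff.1 hab
  obtain ⟨j, hj⟩ := mem_subtree_iff.1 hba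
  cases i with
  | zero => exact hi
  | succ i =>
    have hcyc : p^[j + i + 1] a = a := by rw [Nat.add_assoc, Function.iterate_add_apply, hi, hj]
    rw [← hi, Function.iterate_fixed (hp.apply_eq_of_iterate_succ_eq hcyc)]

theorem notMem_subtree_of_mem_children {c u : V} (hc : c ∈ children p u) :
    u ∉ subtree p c :=
  fun h => hc.2 (hp.eq_of_mem_subtree_of_mem_subtree (mem_subtree_of_mem_children hc) h)

theorem eq_of_mem_children_of_mem_subtree {c d u : V} (hc : c ∈ children p u)
    (hd : d ∈ children p u) (hcd : c ∈ subtree p d) : c = d := by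
  obtain ⟨_ | k, hk⟩ := mem_subtree_iff.1 hcd
  · exact hk
  · rw [Function.iterate_succ_apply, hc.1] at hk
    exact absurd (mem_subtree_iff.2 ⟨k, hk⟩) (hp.notMem_subtree_of_mem_children hd)

theorem pairwiseDisjoint_subtree_children (u : V) :
    (children p u).PairwiseDisjoint (subtree p) := by
  intro c hc d hd hcd
  refine Set.disjoint_left.2 fun x hxc hxd => ?_
  rcases mem_subtree_or_mem_subtree hxc hxd with h | h
  · exact hcd (hp.eq_of_mem_children_of_mem_subtree hc hd h)
  · exact hcd (hp.eq_of_mem_children_of_mem_subtree hd hc h).symm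

theorem pathSet_self (u : V) : pathSet p u u = {u} := by
  ext x
  exact ⟨fun h => hp.eq_of_mem_subtree_of_mem_subtree h.1 h.2,
    fun h => h ▸ ⟨self_mem_subtree x, self_mem_subtree x⟩⟩

theorem pathSet_eq_insert {c u w : V} (hc : c ∈ children p u) (hw : w ∈ subtree p c) :
    pathSet p u w = insert u (pathSet p c w) := by
  ext x
  constructor
  · intro hx
    obtain ⟨hux, hxw⟩ : x ∈ subtree p u ∧ w ∈ subtree p x := hx
    rw [subtree_eq_insert_biUnion_children] at hux
    rcases hux with rfl | hux
    · exact Or.inl rfl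
    obtain ⟨d, hd, hxd⟩ := Set.mem_iUnion₂.1 hux
    obtain rfl : d = c := by
      by_contra hdc
      exact Set.disjoint_left.1 (hp.pairwiseDisjoint_subtree_children u hd hc hdc)
        (subtree_subset_of_mem hxd hxw) hw
    exact Or.inr ⟨hxd, hxw⟩
  · rintro (rfl | ⟨hcx, hxw⟩)
    · exact ⟨self_mem_subtree x, subtree_subset_of_mem (mem_subtree_of_mem_children hc) hw⟩
    · exact ⟨subtree_subset_of_mem (mem_subtree_of_mem_children hc) hcx, hxw⟩

theorem pathUnion_self (u : V) (C : Set V) :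
    pathUnion p u u C = insert u (⋃ c ∈ C, subtree p c) := by
  rw [pathUnion, hp.pathSet_self, Set.singleton_union]

theorem pathUnion_self_children (u : V) : pathUnion p u u (children p u) = subtree p u := by
  rw [hp.pathUnion_self, ← subtree_eq_insert_biUnion_children]

theorem pathUnion_eq_insert {c u w : V} (hc : c ∈ children p u) (hw : w ∈ subtree p c)
    (C : Set V) : pathUnion p u w C = insert u (pathUnion p c w C) := by
  rw [pathUnion, pathUnion, hp.pathSet_eq_insert hc hw, Set.insert_union]

end IsRootedForest

end Forest

section Score

variable {V : Type*} (N : Set V)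

noncomputable def score (X : Set V) : ℤ :=
  ((X ∩ N).ncard : ℤ) - ((X \ N).ncard : ℤ)

theorem score_empty : score N ∅ = 0 := by
  simp [score]

variable [Finite V]

theorem score_union {X Y : Set V} (h : Disjoint X Y) :
    score N (X ∪ Y) = score N X + score N Y := by
  rw [score, score, score, Set.union_inter_distrib_right, Set.union_sdiff_distrib,
    Set.ncard_union_eq (h.mono Set.inter_subset_left Set.inter_subset_left),
    Set.ncard_union_eq (h.mono Set.sdiff_subset Set.sdiff_subset)]
  push_cast
  ring

theorem score_insert_of_notMem {u : V} {X : Set V} (huX : u ∉ X) (huN : u ∉ N) :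
    score N (insert u X) = score N X - 1 := by
  rw [score, score, Set.insert_inter_of_notMem huN, Set.insert_sdiff_of_notMem _ huN,
    Set.ncard_insert_of_notMem fun h => huX h.1]
  push_cast
  ring

theorem score_biUnion_nonpos {ι : Type*} {s : Set ι} (hs : s.Finite) {f : ι → Set V}
    (hf : s.PairwiseDisjoint f) (h : ∀ i ∈ s, score N (f i) ≤ 0) :
    score N (⋃ i ∈ s, f i) ≤ 0 := by
  induction s, hs using Set.Finite.induction_on with
  | empty => simp [score_empty]
  | @insert a s ha _ ih =>
    rw [Set.pairwiseDisjoint_insert_of_notMem ha] at hf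
    rw [Set.biUnion_insert, score_union N (Set.disjoint_iUnion₂_right.2 hf.2)]
    have hfa := h a (Set.mem_insert a s)
    have hs := ih hf.1 fun i hi => h i (Set.mem_insert_of_mem a hi)
    omega

theorem bddAbove_maxScore_set (p : V → V) (u : V) :
    BddAbove {z : ℤ | ∃ w ∈ subtree p u, ∃ C ⊆ children p w,
      z = score N (pathUnion p u w C)} := by
  refine ⟨Nat.card V, ?_⟩
  rintro _ ⟨w, -, C, -, rfl⟩
  have := Set.ncard_le_card (pathUnion p u w C ∩ N)
  rw [score]
  omega

theorem score_le_maxScore {p : V → V} {u w : V} {C : Set V} (hw : w ∈ subtree p u)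
    (hC : C ⊆ children p w) : score N (pathUnion p u w C) ≤ maxScore p N u :=
  le_csSup (bddAbove_maxScore_set N p u) ⟨w, hw, C, hC, rfl⟩

theorem exists_score_eq_maxScore (p : V → V) (u : V) :
    ∃ w ∈ subtree p u, ∃ C ⊆ children p w,
      score N (pathUnion p u w C) = maxScore p N u := by
  obtain ⟨w, hw, C, hC, h⟩ := Int.csSup_mem
    (by exact ⟨_, u, self_mem_subtree u, ∅, Set.empty_subset _, rfl⟩)
    (bddAbove_maxScore_set N p u)
  exact ⟨w, hw, C, hC, h.symm⟩

theorem IsRootedForest.score_subtree_le_maxScore {p : V → V} (hp : IsRootedForest p) (c : V) :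
    score N (subtree p c) ≤ maxScore p N c := by
  simpa only [hp.pathUnion_self_children] using
    score_le_maxScore N (self_mem_subtree c) (subset_refl (children p c))

end Score

/-- If `s(u) > 0`, then `u ∈ N` or `u` has a child `c` with
`s(c) > 0`. -/
theorem maxScore_pos_mem_or_child_pos {V : Type*} [Fintype V]
    (p : V → V) (hp : IsRootedForest p) (N : Set V) (u : V)
    (hu : 0 < maxScore p N u) :
    u ∈ N ∨ ∃ c ∈ children p u, 0 < maxScore p N c := by
  obtain ⟨w, hw, C, hC, hscore⟩ := exists_score_eq_maxScore N p u
  by_cases huN : u ∈ N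
  · exact Or.inl huN
  right
  rcases hw with rfl | hw
  · have hu_notMem : u ∉ ⋃ c ∈ C, subtree p c := by
      simp only [Set.mem_iUnion₂, not_exists]
      exact fun c hc => hp.notMem_subtree_of_mem_children (hC hc)
    have hinsert := score_insert_of_notMem N hu_notMem huN
    rw [← hp.pathUnion_self] at hinsert
    obtain ⟨c, hc, hcpos⟩ : ∃ c ∈ C, 0 < score N (subtree p c) := by
      by_contra! hneg
      have := score_biUnion_nonpos N C.toFinite
        ((hp.pairwiseDisjoint_subtree_children u).subset hC) hneg
      omega
    exact ⟨c, hC hc, hcpos.trans_le (hp.score_subtree_le_maxScore N c)⟩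
  · obtain ⟨c, hc, hwc⟩ := exists_mem_children_of_strictAnc hw
    have hu_notMem : u ∉ pathUnion p c w C :=
      fun h => hp.notMem_subtree_of_mem_children hc (pathUnion_subset_subtree hwc hC h)
    have hinsert := score_insert_of_notMem N hu_notMem huN
    rw [← hp.pathUnion_eq_insert hc hwc] at hinsert
    exact ⟨c, hc, by linarith [score_le_maxScore N hwc hC]⟩
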